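/- Let G be a profinite group whose subgroup space S(G) has an isolated point, and let H be a closed subgroup of G that is solitary (i.e., H is an isolated point of the derived set S(G)′). If K is a closed normal subgroup of G contained in H, then H/K is solitary in G/K. -/

import Mathlib

open Pointwise

/-- The Vietoris topology on the subsets of `X`, generated by the sets
`{F | F ⊆ U}` and `{F | F ∩ U ≠ ∅}` for `U` open. Restricted to (nonempty) compact
subsets this is the usual Vietoris hyperspace topology. -/
def vietorisTop (X : Type*) [TopologicalSpace X] : TopologicalSpace (Set X) :=
  TopologicalSpace.generateFrom
    ({t | ∃ U : Set X, IsOpen U ∧ t = {F : Set X | F ⊆ U}} ∪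
     {t | ∃ U : Set X, IsOpen U ∧ t = {F : Set X | (F ∩ U).Nonempty}})

/-- `SG G` is the space of closed subgroups of `G`, topologized as a subspace of the
hyperspace of `G` with the Vietoris topology. -/
def SG (G : Type*) [Group G] [TopologicalSpace G] : Type _ :=
  {K : Subgroup G // IsClosed (K : Set G)}

instance SG.topologicalSpace (G : Type*) [Group G] [TopologicalSpace G] :
    TopologicalSpace (SG G) :=
  TopologicalSpace.induced (fun K => (K.1 : Set G)) (vietorisTop G)

/-- The derived set (set of non-isolated points) of a topological space. -/
def derivedPts (Y : Type*) [TopologicalSpace Y] : Set Y :=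
  {y | y ∈ closure ({y}ᶜ : Set Y)}

/-- A closed subgroup `H` of `G` is solitary if it is a non-isolated point of the space
`S(G)` of closed subgroups which is isolated in the derived set `S(G)′`. -/
def Solitary {G : Type*} [Group G] [TopologicalSpace G] (H : SG G) : Prop :=
  H ∈ derivedPts (SG G) ∧
    ∃ U : Set (SG G), IsOpen U ∧ U ∩ derivedPts (SG G) = {H}

/-! In a profinite group the sets `{M | MN = HN}`, `N` open normal, form a neighbourhood basis
of `H` in `S(G)`, so an isolated point of `S(G)` contains some open `N` and is an open subgroup.
A solitary `H` is never open: otherwise take `M ≠ H` near `H` of least index; `M` is isolated,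
and a modular-law argument puts it strictly inside some `H' ≠ H` equally near `H`, of smaller
index.

The maps `M ↦ MK/K` and `L ↦ π⁻¹(L)` between `S(G)` and `S(G/K)` are continuous, and the
second is a section of the first. If `H/K` were isolated, every `M` near `H` would satisfy
`MK = H`; one such `M ≠ H` is isolated, hence open, and then so is `H ⊇ M`. Pulling back along
the continuous injection `L ↦ π⁻¹(L)` keeps points non-isolated, so the preimage of a
neighbourhood isolating `H` in `S(G)′` isolates `H/K` in `S(G/K)′`. -/

open Filter Topology

theorem mem_derivedPts_iff {Y : Type*} [TopologicalSpace Y] {y : Y} :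
    y ∈ derivedPts Y ↔ ¬IsOpen ({y} : Set Y) := by
  rw [derivedPts, Set.mem_ofPred_eq, closure_compl, Set.mem_compl_iff, mem_interior_iff_mem_nhds]
  simp [isOpen_iff_mem_nhds]

theorem Continuous.mapsTo_derivedPts {X Y : Type*} [TopologicalSpace X] [TopologicalSpace Y]
    {f : X → Y} (hf : Continuous f) (hinj : f.Injective) :
    Set.MapsTo f (derivedPts X) (derivedPts Y) :=
  fun _ hx => map_mem_closure hf hx fun _ hy h => hy (hinj h)

theorem exists_openNormalSubgroup_mul_subset {Γ : Type*} [Group Γ] [TopologicalSpace Γ]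
    [IsTopologicalGroup Γ] [CompactSpace Γ] [TotallyDisconnectedSpace Γ] {C U : Set Γ}
    (hC : IsCompact C) (hU : IsOpen U) (hCU : C ⊆ U) :
    ∃ N : OpenNormalSubgroup Γ, C * (N : Set Γ) ⊆ U := by
  obtain ⟨V, hV, hCV⟩ := compact_open_separated_mul_right hC hU hCU
  obtain ⟨W, hWV, hW, hW1⟩ := mem_nhds_iff.1 hV
  obtain ⟨N, hNW⟩ := ProfiniteGrp.exist_openNormalSubgroup_sub_open_nhds_of_one hW hW1
  exact ⟨N, (Set.mul_subset_mul_left (hNW.trans hWV)).trans hCV⟩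

namespace SG

section Topology

variable {Γ : Type*} [Group Γ] [TopologicalSpace Γ]

theorem continuous_iff {X : Type*} [TopologicalSpace X] {f : X → SG Γ} :
    Continuous f ↔ ∀ U : Set Γ, IsOpen U →
      IsOpen {x | ((f x).1 : Set Γ) ⊆ U} ∧ IsOpen {x | ((f x).1 ∩ U : Set Γ).Nonempty} := by
  rw [continuous_induced_rng, vietorisTop, continuous_generateFrom_iff]
  constructor
  · intro h U hU
    exact ⟨h _ (Or.inl ⟨U, hU, rfl⟩), h _ (Or.inr ⟨U, hU, rfl⟩)⟩
  · rintro h _ (⟨U, hU, rfl⟩ | ⟨U, hU, rfl⟩)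
    exacts [(h U hU).1, (h U hU).2]

theorem isOpen_setOf_subset {U : Set Γ} (hU : IsOpen U) :
    IsOpen {M : SG Γ | (M.1 : Set Γ) ⊆ U} :=
  (continuous_iff.1 continuous_id U hU).1

theorem isOpen_setOf_inter_nonempty {U : Set Γ} (hU : IsOpen U) :
    IsOpen {M : SG Γ | ((M.1 : Set Γ) ∩ U).Nonempty} :=
  (continuous_iff.1 continuous_id U hU).2

def basicNbhd (N : OpenNormalSubgroup Γ) (H : SG Γ) : Set (SG Γ) :=
  {M | M.1 ⊔ N.toSubgroup = H.1 ⊔ N.toSubgroup}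

theorem mem_basicNbhd_self (N : OpenNormalSubgroup Γ) (H : SG Γ) : H ∈ basicNbhd N H := rfl

theorem basicNbhd_mono {N N' : OpenNormalSubgroup Γ} (h : N ≤ N') (H : SG Γ) :
    basicNbhd N H ⊆ basicNbhd N' H := by
  intro M (hM : M.1 ⊔ N.toSubgroup = H.1 ⊔ N.toSubgroup)
  have hNN' : N.toSubgroup ≤ N'.toSubgroup := h
  change M.1 ⊔ N'.toSubgroup = H.1 ⊔ N'.toSubgroup
  rw [← sup_eq_right.2 hNN', ← sup_assoc, hM, sup_assoc]

theorem isOpen_basicNbhd [IsTopologicalGroup Γ] [CompactSpace Γ] (N : OpenNormalSubgroup Γ)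
    (H : SG Γ) : IsOpen (basicNbhd N H) := by
  set J := H.1 ⊔ N.toSubgroup
  have hJ : IsOpen (J : Set Γ) := Subgroup.isOpen_mono le_sup_right N.isOpen
  obtain ⟨s, hs⟩ := (J.isClosed_of_isOpen hJ).isCompact.elim_finite_subcover
    (fun t : J => (t : Γ) • (N : Set Γ)) (fun _ => N.isOpen.smul _)
    fun x hx => Set.mem_iUnion.2 ⟨⟨x, hx⟩, 1, one_mem N, mul_one x⟩
  have heq : basicNbhd N H = {M : SG Γ | (M.1 : Set Γ) ⊆ J} ∩
      ⋂ t ∈ s, {M : SG Γ | ((M.1 : Set Γ) ∩ (t : Γ) • (N : Set Γ)).Nonempty} := by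
    ext M
    simp only [Set.mem_inter_iff, Set.mem_iInter, Set.mem_ofPred_eq]
    constructor
    · intro (hM : M.1 ⊔ N.toSubgroup = J)
      refine ⟨fun x hx => by rw [← hM]; exact Subgroup.mem_sup_left hx, fun t _ => ?_⟩
      have ht : (t : Γ) ∈ ((M.1 ⊔ N.toSubgroup : Subgroup Γ) : Set Γ) := by
        rw [hM]; exact t.2
      rw [Subgroup.mul_normal] at ht
      obtain ⟨m, hm, n, hn, hmn⟩ := ht
      exact ⟨m, hm, n⁻¹, inv_mem hn, by simp [← hmn]⟩
    · rintro ⟨hMJ, hMs⟩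
      refine le_antisymm (sup_le hMJ le_sup_right) fun x hx => ?_
      obtain ⟨t, hts, hxt⟩ := Set.mem_iUnion₂.1 (hs hx)
      obtain ⟨m, hm, hmt⟩ := hMs t hts
      rw [mem_leftCoset_iff] at hxt hmt
      have hmx : m⁻¹ * x ∈ N := by simpa [mul_assoc] using mul_mem (inv_mem hmt) hxt
      simpa using mul_mem (Subgroup.mem_sup_left (S := M.1) (T := N.toSubgroup) hm)
        (Subgroup.mem_sup_right hmx)
  rw [heq]
  exact (isOpen_setOf_subset hJ).inter
    (s.finite_toSet.isOpen_biInter fun t _ => isOpen_setOf_inter_nonempty (N.isOpen.smul _))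

theorem le_of_basicNbhd_subset_singleton [IsTopologicalGroup Γ] {N : OpenNormalSubgroup Γ}
    {M : SG Γ} (hM : basicNbhd N M ⊆ {M}) : N.toSubgroup ≤ M.1 := by
  have hMN : IsClosed ((M.1 ⊔ N.toSubgroup : Subgroup Γ) : Set Γ) :=
    Subgroup.isClosed_of_isOpen _ (Subgroup.isOpen_mono le_sup_right N.isOpen)
  have hself : (⟨M.1 ⊔ N.toSubgroup, hMN⟩ : SG Γ) ∈ basicNbhd N M := by
    change M.1 ⊔ N.toSubgroup ⊔ N.toSubgroup = M.1 ⊔ N.toSubgroup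
    rw [sup_assoc, sup_idem]
  exact sup_eq_left.1 (congrArg Subtype.val (hM hself))

end Topology

section Profinite

variable {Γ : Type*} [Group Γ] [TopologicalSpace Γ] [IsTopologicalGroup Γ] [CompactSpace Γ]
  [TotallyDisconnectedSpace Γ]

theorem exists_basicNbhd_subset_setOf_subset {H : SG Γ} {U : Set Γ} (hU : IsOpen U)
    (hHU : (H.1 : Set Γ) ⊆ U) :
    ∃ N : OpenNormalSubgroup Γ, basicNbhd N H ⊆ {M | (M.1 : Set Γ) ⊆ U} := by
  obtain ⟨N, hN⟩ := exists_openNormalSubgroup_mul_subset H.2.isCompact hU hHU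
  refine ⟨N, fun M (hM : M.1 ⊔ N.toSubgroup = H.1 ⊔ N.toSubgroup) x hx => hN ?_⟩
  change x ∈ (H.1 : Set Γ) * (N.toSubgroup : Set Γ)
  rw [← Subgroup.mul_normal, ← hM]
  exact Subgroup.mem_sup_left hx

theorem exists_basicNbhd_subset_setOf_inter_nonempty {H : SG Γ} {U : Set Γ} (hU : IsOpen U)
    (hHU : ((H.1 : Set Γ) ∩ U).Nonempty) :
    ∃ N : OpenNormalSubgroup Γ, basicNbhd N H ⊆ {M | ((M.1 : Set Γ) ∩ U).Nonempty} := by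
  obtain ⟨h, hhH, hhU⟩ := hHU
  obtain ⟨N, hN⟩ := exists_openNormalSubgroup_mul_subset isCompact_singleton hU
    (Set.singleton_subset_iff.2 hhU)
  refine ⟨N, fun M (hM : M.1 ⊔ N.toSubgroup = H.1 ⊔ N.toSubgroup) => ?_⟩
  have hh : h ∈ ((M.1 ⊔ N.toSubgroup : Subgroup Γ) : Set Γ) := by
    rw [hM]; exact Subgroup.mem_sup_left hhH
  rw [Subgroup.mul_normal] at hh
  obtain ⟨m, hm, n, hn, rfl⟩ := hh
  exact ⟨m, hm, hN ⟨m * n, rfl, n⁻¹, inv_mem hn, mul_inv_cancel_right m n⟩⟩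

theorem hasBasis_nhds (H : SG Γ) :
    (𝓝 H).HasBasis (fun _ : OpenNormalSubgroup Γ => True) (basicNbhd · H) := by
  have hdir : Directed (· ≥ ·) (basicNbhd · H) := fun N₁ N₂ =>
    ⟨N₁ ⊓ N₂, basicNbhd_mono inf_le_left H, basicNbhd_mono inf_le_right H⟩
  have : Nonempty (OpenNormalSubgroup Γ) :=
    ⟨{ toOpenSubgroup := ⊤, isNormal' := inferInstanceAs (⊤ : Subgroup Γ).Normal }⟩
  convert hasBasis_iInf_principal hdir
  refine le_antisymm (le_iInf fun N => le_principal_iff.2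
    ((isOpen_basicNbhd N H).mem_nhds (mem_basicNbhd_self N H))) ?_
  rw [@nhds_induced _ _ (vietorisTop Γ), vietorisTop, TopologicalSpace.nhds_generateFrom,
    ← map_le_iff_le_comap]
  refine le_iInf₂ fun s ⟨hHs, hs⟩ => le_principal_iff.2 ?_
  obtain ⟨N, hN⟩ : ∃ N, basicNbhd N H ⊆ (fun M : SG Γ => (M.1 : Set Γ)) ⁻¹' s := by
    rcases hs with ⟨U, hU, rfl⟩ | ⟨U, hU, rfl⟩
    exacts [exists_basicNbhd_subset_setOf_subset hU hHs,
      exists_basicNbhd_subset_setOf_inter_nonempty hU hHs]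
  exact mem_iInf_of_mem N (le_principal_iff.1 (principal_mono.2 hN))

theorem mem_derivedPts_iff_basicNbhd {H : SG Γ} :
    H ∈ derivedPts (SG Γ) ↔
      ∀ N : OpenNormalSubgroup Γ, ∃ M ∈ basicNbhd N H, M ≠ H := by
  simp only [derivedPts, Set.mem_ofPred_eq, mem_closure_iff_nhds_basis (hasBasis_nhds H),
    true_imp_iff]
  exact forall_congr' fun N => by simp only [Set.mem_compl_iff, Set.mem_singleton_iff, and_comm]

theorem notMem_derivedPts_iff_basicNbhd {H : SG Γ} :
    H ∉ derivedPts (SG Γ) ↔ ∃ N : OpenNormalSubgroup Γ, basicNbhd N H ⊆ {H} := by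
  simp [mem_derivedPts_iff_basicNbhd, Set.subset_def]

theorem isOpen_of_notMem_derivedPts {M : SG Γ} (hM : M ∉ derivedPts (SG Γ)) :
    IsOpen (M.1 : Set Γ) := by
  obtain ⟨N, hN⟩ := notMem_derivedPts_iff_basicNbhd.1 hM
  exact Subgroup.isOpen_mono (le_of_basicNbhd_subset_singleton hN) N.isOpen

/-- By the modular law `(H' ∩ M)N = M` once `H'N = HN` for a small enough `N ≤ M`, and `M` is
the only subgroup that close to itself. -/
theorem exists_lt_mem_basicNbhd {M H : SG Γ} (hM : M ∉ derivedPts (SG Γ))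
    (hH : H ∈ derivedPts (SG Γ)) (hMH : M.1 < H.1) (N : OpenNormalSubgroup Γ) :
    ∃ H' ∈ basicNbhd N H, H' ≠ H ∧ M.1 < H'.1 := by
  obtain ⟨N₁, hN₁⟩ := notMem_derivedPts_iff_basicNbhd.1 hM
  set N₀ := N₁ ⊓ N
  have hN₀ : basicNbhd N₀ M ⊆ {M} := (basicNbhd_mono inf_le_left M).trans hN₁
  have hN₀M : N₀.toSubgroup ≤ M.1 := le_of_basicNbhd_subset_singleton hN₀
  obtain ⟨H', hH'N₀ : H'.1 ⊔ N₀.toSubgroup = H.1 ⊔ N₀.toSubgroup, hH'H⟩ :=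
    mem_derivedPts_iff_basicNbhd.1 hH N₀
  have hinf : (⟨H'.1 ⊓ M.1, H'.2.inter M.2⟩ : SG Γ) ∈ basicNbhd N₀ M := by
    change H'.1 ⊓ M.1 ⊔ N₀.toSubgroup = M.1 ⊔ N₀.toSubgroup
    rw [sup_eq_left.2 hN₀M, inf_comm]
    apply SetLike.coe_injective
    rw [Subgroup.mul_normal, Subgroup.inf_mul_assoc _ _ _ hN₀M,
      ← Subgroup.mul_normal H'.1 N₀.toSubgroup, hH'N₀]
    exact Set.inter_eq_left.2 (hMH.le.trans le_sup_left)
  have hMH' : M.1 ≤ H'.1 := by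
    rw [← congrArg Subtype.val (hN₀ hinf)]
    exact inf_le_left
  refine ⟨H', basicNbhd_mono inf_le_right H hH'N₀, hH'H, hMH'.lt_of_ne fun hMH'eq => ?_⟩
  have : H.1 ⊔ N₀.toSubgroup ≤ M.1 := by
    rw [← hH'N₀, ← hMH'eq]
    exact sup_le le_rfl hN₀M
  exact hMH.not_ge (le_sup_left.trans this)

end Profinite

section Quotient

variable {G : Type*} [Group G] [TopologicalSpace G] [IsTopologicalGroup G] (K : Subgroup G)
  [K.Normal]

def comapMk (L : SG (G ⧸ K)) : SG G :=
  ⟨L.1.comap (QuotientGroup.mk' K), L.2.preimage QuotientGroup.continuous_mk⟩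

variable {K}

def mapMk (hK : IsCompact (K : Set G)) (M : SG G) : SG (G ⧸ K) :=
  ⟨M.1.map (QuotientGroup.mk' K), by
    rw [Subgroup.coe_map]
    exact QuotientGroup.isClosedMap_coe hK _ M.2⟩

theorem mapMk_comapMk (hK : IsCompact (K : Set G)) (L : SG (G ⧸ K)) :
    mapMk hK (comapMk K L) = L :=
  Subtype.ext (Subgroup.map_comap_eq_self_of_surjective (QuotientGroup.mk'_surjective K) L.1)

theorem comapMk_mapMk (hK : IsCompact (K : Set G)) (M : SG G) :
    (comapMk K (mapMk hK M)).1 = M.1 ⊔ K := by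
  simp [comapMk, mapMk, Subgroup.comap_map_eq]

theorem continuous_mapMk (hK : IsCompact (K : Set G)) : Continuous (mapMk hK) :=
  continuous_iff.2 fun U hU => by
    have hpre := hU.preimage (QuotientGroup.continuous_mk (N := K))
    simp only [mapMk, Subgroup.coe_map, Set.image_subset_iff, Set.image_inter_nonempty_iff]
    exact ⟨isOpen_setOf_subset hpre, isOpen_setOf_inter_nonempty hpre⟩

theorem continuous_comapMk (hK : IsCompact (K : Set G)) : Continuous (comapMk K) :=
  continuous_iff.2 fun U hU => by
    constructor
    -- `π⁻¹ L ⊆ U` iff `L` misses `π (Uᶜ)`, which is closed because `K` is compact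
    · convert isOpen_setOf_subset
        (QuotientGroup.isClosedMap_coe hK _ hU.isClosed_compl).isOpen_compl using 1
      ext L
      constructor
      · rintro h _ hx ⟨g, hg, rfl⟩
        exact hg (h hx)
      · intro h g hg
        by_contra hgU
        exact h hg ⟨g, hgU, rfl⟩
    · convert isOpen_setOf_inter_nonempty (QuotientGroup.isOpenMap_coe (N := K) U hU) using 1
      ext L
      refine ⟨fun ⟨g, hgL, hgU⟩ => ⟨_, hgL, g, hgU, rfl⟩, ?_⟩
      rintro ⟨_, hL, g, hgU, rfl⟩
      exact ⟨g, hL, hgU⟩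

end Quotient

end SG

namespace Solitary

open SG

variable {G : Type*} [Group G] [TopologicalSpace G] [IsTopologicalGroup G] [CompactSpace G]
  [TotallyDisconnectedSpace G]

theorem not_isOpen {H : SG G} (hH : Solitary H) : ¬IsOpen (H.1 : Set G) := by
  intro hHo
  obtain ⟨hHd, U, hUo, hUD⟩ := hH
  obtain ⟨N₁, -, hN₁U⟩ := (hasBasis_nhds H).mem_iff.1 (hUo.mem_nhds (hUD.superset rfl).1)
  obtain ⟨N₂, hN₂H⟩ :=
    ProfiniteGrp.exist_openNormalSubgroup_sub_open_nhds_of_one hHo H.1.one_mem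
  set N := N₁ ⊓ N₂
  have hproper : ∀ M ∈ basicNbhd N H, M ≠ H → M ∉ derivedPts (SG G) ∧ M.1 < H.1 := by
    intro M (hM : M.1 ⊔ N.toSubgroup = H.1 ⊔ N.toSubgroup) hMH
    refine ⟨fun hMd => hMH (hUD.subset ⟨hN₁U (basicNbhd_mono inf_le_left H hM), hMd⟩), ?_⟩
    have hNH : N.toSubgroup ≤ H.1 :=
      fun _ hx => hN₂H ((inf_le_right : N₁ ⊓ N₂ ≤ N₂) hx)
    rw [sup_eq_left.2 hNH] at hM
    exact (hM ▸ le_sup_left).lt_of_ne (mt Subtype.ext hMH)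
  obtain ⟨M, ⟨hMN, hMH⟩, hmin⟩ := (measure fun M : SG G => M.1.index).wf.has_min
    {M | M ∈ basicNbhd N H ∧ M ≠ H} (mem_derivedPts_iff_basicNbhd.1 hHd N)
  obtain ⟨hMiso, hMlt⟩ := hproper M hMN hMH
  obtain ⟨H', hH'N, hH'H, hMH'⟩ := exists_lt_mem_basicNbhd hMiso hHd hMlt N
  have := M.1.quotient_finite_of_isOpen (isOpen_of_notMem_derivedPts hMiso)
  have := M.1.finiteIndex_of_finite_quotient
  exact hmin H' ⟨hH'N, hH'H⟩ (Subgroup.index_strictAnti hMH')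

theorem mapMk_mem_derivedPts {H : SG G} (hH : Solitary H) {K : Subgroup G} [K.Normal]
    (hK : IsCompact (K : Set G)) (hKH : K ≤ H.1) :
    SG.mapMk hK H ∈ derivedPts (SG (G ⧸ K)) := by
  have ⟨hHd, U, hUo, hUD⟩ := hH
  rw [mem_derivedPts_iff]
  intro hopen
  obtain ⟨M, ⟨hMK : SG.mapMk hK M = SG.mapMk hK H, hMU⟩, hMH⟩ := mem_closure_iff.1 hHd _
    ((hopen.preimage (continuous_mapMk hK)).inter hUo) ⟨rfl, (hUD.superset rfl).1⟩
  have hMiso : M ∉ derivedPts (SG G) := fun hMd => hMH (hUD.subset ⟨hMU, hMd⟩)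
  have hMH : M.1 ≤ H.1 := by
    have := congrArg (fun L => (comapMk K L).1) hMK
    simp only [comapMk_mapMk, sup_eq_left.2 hKH] at this
    exact this ▸ le_sup_left
  exact not_isOpen hH (Subgroup.isOpen_mono hMH (isOpen_of_notMem_derivedPts hMiso))

theorem mapMk {H : SG G} (hH : Solitary H) {K : Subgroup G} [K.Normal]
    (hK : IsCompact (K : Set G)) (hKH : K ≤ H.1) :
    Solitary (SG.mapMk hK H) := by
  obtain ⟨U, hUo, hUD⟩ := hH.2
  have hcomap : comapMk K (SG.mapMk hK H) = H :=
    Subtype.ext (by rw [comapMk_mapMk, sup_eq_left.2 hKH])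
  have hderiv := (continuous_comapMk hK).mapsTo_derivedPts
    (Function.LeftInverse.injective (mapMk_comapMk hK))
  refine ⟨mapMk_mem_derivedPts hH hK hKH, comapMk K ⁻¹' U,
    hUo.preimage (continuous_comapMk hK), ?_⟩
  refine Set.Subset.antisymm (fun L ⟨hLU, hLd⟩ => ?_) ?_
  · rw [← mapMk_comapMk hK L, hUD.subset ⟨hLU, hderiv hLd⟩]
    rfl
  · rintro L rfl
    exact ⟨by rw [Set.mem_preimage, hcomap]; exact (hUD.superset rfl).1,
      mapMk_mem_derivedPts hH hK hKH⟩

end Solitary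

theorem solitary_quotient_general {G : Type*} [Group G] [TopologicalSpace G] [IsTopologicalGroup G]
    [CompactSpace G] [TotallyDisconnectedSpace G]
    (H : SG G) (hH : Solitary H)
    (K : Subgroup G) (hKc : IsClosed (K : Set G)) (hKn : K.Normal) (hKH : K ≤ H.1) :
    ∃ hc : IsClosed ((Subgroup.map (QuotientGroup.mk' K) H.1 : Subgroup (G ⧸ K)) :
        Set (G ⧸ K)),
      Solitary (⟨Subgroup.map (QuotientGroup.mk' K) H.1, hc⟩ : SG (G ⧸ K)) :=
  ⟨(SG.mapMk hKc.isCompact H).2, hH.mapMk hKc.isCompact hKH⟩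

/-- Let `G` be a profinite group whose subgroup space `S(G)` has an isolated point, and
let `H` be a solitary closed subgroup of `G`. If `K` is a closed normal subgroup of `G`
contained in `H`, then the image `H/K` is solitary in `G/K`. -/
theorem solitary_quotient {G : Type*} [Group G] [TopologicalSpace G] [IsTopologicalGroup G]
    [CompactSpace G] [T2Space G] [TotallyDisconnectedSpace G]
    (hiso : ∃ L : SG G, IsOpen ({L} : Set (SG G)))
    (H : SG G) (hH : Solitary H)
    (K : Subgroup G) (hKc : IsClosed (K : Set G)) (hKn : K.Normal) (hKH : K ≤ H.1) :
    ∃ hc : IsClosed ((Subgroup.map (QuotientGroup.mk' K) H.1 : Subgroup (G ⧸ K)) :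
        Set (G ⧸ K)),
      Solitary (⟨Subgroup.map (QuotientGroup.mk' K) H.1, hc⟩ : SG (G ⧸ K)) :=
  solitary_quotient_general H hH K hKc hKn hKH
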